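/- Realignment of a product of density matrices: If ρ_A is a density matrix on ℂ^{d_A} and ρ_B is a density matrix on ℂ^{d_B}, then the trace norm of the realignment of their product satisfies ‖R(ρ_A ⊗ ρ_B)‖_tr ≤ 1. -/

import Mathlib

/-!
`R(ρ_A ⊗ ρ_B)` is the rank-one matrix `vec(ρ_A) vec(ρ_B)ᵀ`, and the trace norm of a rank-one
matrix `u vᵀ` is `‖u‖₂ ‖v‖₂`: indeed `√((u vᵀ)(u vᵀ)ᴴ) = (‖v‖₂ / ‖u‖₂) u uᴴ`. So the trace norm is
the product of the Frobenius norms of `ρ_A` and `ρ_B`. For a positive semidefinite `ρ` the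
`2 × 2` principal minors give `|ρ_ij|² ≤ ρ_ii ρ_jj`, hence `‖ρ‖_F ≤ Tr ρ = 1`.
-/

open Matrix Kronecker ComplexOrder

/-- Trace norm `‖X‖_tr = Tr √(X Xᴴ)`. -/
noncomputable def traceNorm {m n : Type*} [Fintype m] [Fintype n] [DecidableEq m]
    (X : Matrix m n ℂ) : ℝ :=
  (((Matrix.posSemidef_self_mul_conjTranspose X).1.eigenvectorUnitary : Matrix m m ℂ) *
      diagonal (fun i => ((Real.sqrt ((Matrix.posSemidef_self_mul_conjTranspose X).1.eigenvalues i) : ℝ) : ℂ)) *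
      (star (Matrix.posSemidef_self_mul_conjTranspose X).1.eigenvectorUnitary : Matrix m m ℂ)).trace.re

/-- A density matrix: positive semidefinite with trace 1. -/
def IsDensityMatrix {n : Type*} [Fintype n] (ρ : Matrix n n ℂ) : Prop :=
  ρ.PosSemidef ∧ ρ.trace = 1

/-- The realignment map: `R(ρ)_{(i,j),(k,l)} = ρ_{(i,k),(j,l)}`. -/
def realign {dA dB : ℕ} (ρ : Matrix (Fin dA × Fin dB) (Fin dA × Fin dB) ℂ) :
    Matrix (Fin dA × Fin dA) (Fin dB × Fin dB) ℂ :=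
  fun p q => ρ (p.1, q.1) (p.2, q.2)

/-- Partial transpose on the second subsystem: `(ρ^{T₂})_{(i,k),(j,l)} = ρ_{(i,l),(j,k)}`. -/
def ptranspose2 {d : ℕ} (ρ : Matrix (Fin d × Fin d) (Fin d × Fin d) ℂ) :
    Matrix (Fin d × Fin d) (Fin d × Fin d) ℂ :=
  fun p q => ρ (p.1, q.2) (q.1, p.2)

/-- The swap (exchange) operator `F_{(i,k),(j,l)} = δ_{il} δ_{kj}`. -/
def swapOp (d : ℕ) : Matrix (Fin d × Fin d) (Fin d × Fin d) ℂ :=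
  fun p q => if p.1 = q.2 ∧ p.2 = q.1 then 1 else 0

/-- The unnormalized maximally entangled projector `(|Ω⟩⟨Ω|)_{(i,k),(j,l)} = δ_{ik} δ_{jl}`. -/
def omegaProj (d : ℕ) : Matrix (Fin d × Fin d) (Fin d × Fin d) ℂ :=
  fun p q => if p.1 = p.2 ∧ q.1 = q.2 then 1 else 0

/-- Separability: `ρ` is a finite convex combination of products of density matrices. -/
def IsSeparableState {dA dB : ℕ} (ρ : Matrix (Fin dA × Fin dB) (Fin dA × Fin dB) ℂ) : Prop :=
  ∃ (m : ℕ) (p : Fin m → ℝ) (σ : Fin m → Matrix (Fin dA) (Fin dA) ℂ)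
    (τ : Fin m → Matrix (Fin dB) (Fin dB) ℂ),
    (∀ k, 0 ≤ p k) ∧ (∑ k, p k = 1) ∧ (∀ k, IsDensityMatrix (σ k)) ∧
    (∀ k, IsDensityMatrix (τ k)) ∧ ρ = ∑ k, (p k : ℂ) • (σ k ⊗ₖ τ k)

theorem Matrix.PosSemidef.norm_sq_apply_le {n : Type*} {A : Matrix n n ℂ} (hA : A.PosSemidef)
    (i j : n) : ‖A i j‖ ^ 2 ≤ (A i i).re * (A j j).re := by
  have hdet := (hA.submatrix ![i, j]).det_nonneg
  simp only [det_fin_two, submatrix_apply, cons_val_zero, cons_val_one] at hdet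
  rw [← hA.1.apply j i, Complex.star_def, Complex.mul_conj', ← hA.1.coe_re_apply_self i,
    ← hA.1.coe_re_apply_self j, sub_nonneg] at hdet
  norm_cast at hdet
  exact Complex.real_le_real.mp hdet

theorem Matrix.PosSemidef.sum_norm_sq_le_re_trace_sq {n : Type*} [Fintype n] {A : Matrix n n ℂ}
    (hA : A.PosSemidef) : ∑ i, ∑ j, ‖A i j‖ ^ 2 ≤ A.trace.re ^ 2 :=
  calc ∑ i, ∑ j, ‖A i j‖ ^ 2 ≤ ∑ i, ∑ j, (A i i).re * (A j j).re :=
        Finset.sum_le_sum fun i _ => Finset.sum_le_sum fun j _ => hA.norm_sq_apply_le i j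
    _ = A.trace.re ^ 2 := by simp [trace, Complex.re_sum, sq, Finset.sum_mul_sum]

theorem IsDensityMatrix.sum_norm_sq_le_one {n : Type*} [Fintype n] {ρ : Matrix n n ℂ}
    (hρ : IsDensityMatrix ρ) : ∑ i, ∑ j, ‖ρ i j‖ ^ 2 ≤ 1 := by
  simpa [hρ.2] using hρ.1.sum_norm_sq_le_re_trace_sq

theorem star_dotProduct_self_eq_sum_norm_sq {m : Type*} [Fintype m] (u : m → ℂ) :
    star u ⬝ᵥ u = ((∑ i, ‖u i‖ ^ 2 : ℝ) : ℂ) := by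
  simp [dotProduct, Complex.conj_mul']

open scoped MatrixOrder in
theorem traceNorm_eq_re_trace_sqrt {m n : Type*} [Fintype m] [Fintype n] [DecidableEq m]
    (X : Matrix m n ℂ) : traceNorm X = (CFC.sqrt (X * Xᴴ)).trace.re := by
  have hX := posSemidef_self_mul_conjTranspose X
  rw [CFC.sqrt_eq_real_sqrt _ hX.nonneg, cfcₙ_eq_cfc, hX.1.cfc_eq]
  rfl

open scoped MatrixOrder in
theorem traceNorm_vecMulVec {m n : Type*} [Fintype m] [Fintype n] [DecidableEq m]
    (u : m → ℂ) (v : n → ℂ) :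
    traceNorm (vecMulVec u v) = √(∑ i, ‖u i‖ ^ 2) * √(∑ j, ‖v j‖ ^ 2) := by
  set α := ∑ i, ‖u i‖ ^ 2
  set β := ∑ j, ‖v j‖ ^ 2
  rcases eq_or_ne u 0 with rfl | hu
  · simp [α, traceNorm_eq_re_trace_sqrt]
  have hα : α ≠ 0 := by
    have := (dotProduct_star_self_eq_zero (v := u)).not.mpr hu
    rw [star_dotProduct_self_eq_sum_norm_sq] at this
    exact_mod_cast this
  set P := vecMulVec u (star u)
  have hXX : vecMulVec u v * (vecMulVec u v)ᴴ = (β : ℂ) • P := by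
    rw [conjTranspose_vecMulVec, vecMulVec_mul_vecMulVec, dotProduct_comm,
      star_dotProduct_self_eq_sum_norm_sq, vecMulVec_smul]
  have hPP : P * P = (α : ℂ) • P := by
    rw [vecMulVec_mul_vecMulVec, star_dotProduct_self_eq_sum_norm_sq, vecMulVec_smul]
  set c : ℝ := √β / √α
  have hS : CFC.sqrt (vecMulVec u v * (vecMulVec u v)ᴴ) = (c : ℂ) • P := by
    refine CFC.sqrt_unique ?_ ((posSemidef_vecMulVec_self_star u).smul ?_).nonneg
    · rw [smul_mul_smul, hPP, smul_smul, hXX]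
      norm_cast
      rw [div_mul_div_comm, Real.mul_self_sqrt (by positivity), Real.mul_self_sqrt (by positivity),
        div_mul_cancel₀ _ hα]
    · exact_mod_cast (by positivity : 0 ≤ c)
  rw [traceNorm_eq_re_trace_sqrt, hS, trace_smul, trace_vecMulVec, dotProduct_comm,
    star_dotProduct_self_eq_sum_norm_sq, smul_eq_mul, ← Complex.ofReal_mul, Complex.ofReal_re]
  calc √β / √α * α = √β / √α * (√α * √α) := by rw [Real.mul_self_sqrt (by positivity)]
    _ = √α * √β := by field_simp

theorem realign_kronecker {dA dB : ℕ} (A : Matrix (Fin dA) (Fin dA) ℂ)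
    (B : Matrix (Fin dB) (Fin dB) ℂ) :
    realign (A ⊗ₖ B) = vecMulVec (fun p => A p.1 p.2) (fun q => B q.1 q.2) :=
  rfl

/-- **Realignment of a product of density matrices** has trace norm at most 1. -/
theorem traceNorm_realign_kron_le_one {dA dB : ℕ}
    (ρA : Matrix (Fin dA) (Fin dA) ℂ) (ρB : Matrix (Fin dB) (Fin dB) ℂ)
    (hA : IsDensityMatrix ρA) (hB : IsDensityMatrix ρB) :
    traceNorm (realign (ρA ⊗ₖ ρB)) ≤ 1 := by
  rw [realign_kronecker, traceNorm_vecMulVec]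
  simp only [Fintype.sum_prod_type]
  exact mul_le_one₀ (Real.sqrt_le_one.mpr hA.sum_norm_sq_le_one) (Real.sqrt_nonneg _)
    (Real.sqrt_le_one.mpr hB.sum_norm_sq_le_one)
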